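/- Let 0 < ε ≤ 1 and let φ : ℝ → ℝ be smooth with 0 ≤ φ(t) ≤ 1 for all t, φ'(t) ≤ 0 for all t, |φ'(t)| ≤ ε and |φ''(t)| ≤ ε for all t, and φ(t) = 1 for all t ≤ 1. Define c(t) = (e^t + φ(t)e^{−t})/2. Then for every t > 0 one has 0 < c''(t) ≤ (1 + ε)c(t); equivalently the quantity −c''(t)/c(t) lies in the interval [−1−ε, 0). -/

import Mathlib

/-!
Writing `c = warp φ` with `warp f t = (eᵗ + f t e⁻ᵗ)/2`, differentiation preserves the shape:
`(warp f)' = warp (f' - f)`, hence `c'' = warp (φ'' - 2φ' + φ)`. For `t > 0` any `warp g t` with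
`g ≥ -1` is positive, since `eᵗ > e⁻ᵗ`; this gives `c > 0` and, as `φ'' - 2φ' + φ ≥ -ε ≥ -1`,
also `c'' > 0`. For the upper bound, `(1 + ε) c - c'' = (ε eᵗ + (εφ - φ'' + 2φ') e⁻ᵗ)/2`. Where
`t < 1` the cutoff is constant, so this is `ε c ≥ 0`; where `t ≥ 1` the bracket is at least `-3ε`
and `3 e⁻ᵗ ≤ eᵗ` because `e² ≥ 3`.
-/

open Real

noncomputable def warp (f : ℝ → ℝ) (t : ℝ) : ℝ := (exp t + f t * exp (-t)) / 2

theorem hasDerivAt_warp {f : ℝ → ℝ} {f' t : ℝ} (hf : HasDerivAt f f' t) :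
    HasDerivAt (warp f) ((exp t + (f' - f t) * exp (-t)) / 2) t := by
  have hexp_neg : HasDerivAt (fun s => exp (-s)) (-exp (-t)) t := by
    simpa using (hasDerivAt_neg t).exp
  exact (((hasDerivAt_exp t).add (hf.mul hexp_neg)).div_const 2).congr_deriv (by ring)

theorem deriv_warp {f : ℝ → ℝ} (hf : Differentiable ℝ f) :
    deriv (warp f) = warp (deriv f - f) :=
  funext fun t => (hasDerivAt_warp (hf t).hasDerivAt).deriv

theorem deriv_deriv_warp {f : ℝ → ℝ} (hf : ContDiff ℝ 2 f) :
    deriv (deriv (warp f)) = warp (fun t => deriv (deriv f) t - 2 * deriv f t + f t) := by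
  obtain ⟨hf₁, -, hf'⟩ := contDiff_succ_iff_deriv.mp (show ContDiff ℝ (1 + 1) f from hf)
  have hf₂ : Differentiable ℝ (deriv f) := hf'.differentiable one_ne_zero
  rw [deriv_warp hf₁, deriv_warp (hf₂.sub hf₁)]
  ext t
  simp only [warp, Pi.sub_apply, deriv_sub (hf₂ t) (hf₁ t)]
  ring

theorem warp_pos {g : ℝ → ℝ} {t : ℝ} (ht : 0 < t) (hg : -1 ≤ g t) : 0 < warp g t := by
  have hlt : exp (-t) < exp t := exp_lt_exp.mpr (by linarith)
  unfold warp
  nlinarith [exp_pos (-t)]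

theorem three_mul_exp_neg_le_exp {t : ℝ} (ht : 1 ≤ t) : 3 * exp (-t) ≤ exp t := by
  have hsplit : exp t = exp (2 * t) * exp (-t) := by rw [← exp_add]; ring_nf
  have h3 : 3 ≤ exp (2 * t) := by linarith [add_one_le_exp (2 * t)]
  rw [hsplit]
  exact mul_le_mul_of_nonneg_right h3 (exp_pos _).le

theorem warp_le_one_add_mul_warp {f g : ℝ → ℝ} {ε t : ℝ} (hε : 0 ≤ ε) (hf : 0 ≤ f t)
    (hg : g t ≤ f t + 3 * ε) (hg_lt_one : t < 1 → g t ≤ f t) :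
    warp g t ≤ (1 + ε) * warp f t := by
  have hE := exp_pos t
  have he := exp_pos (-t)
  suffices (g t - f t) * exp (-t) ≤ ε * exp t + ε * f t * exp (-t) by
    unfold warp; nlinarith
  rcases lt_or_ge t 1 with h1 | h1
  · nlinarith [hg_lt_one h1, mul_nonneg (mul_nonneg hε hf) he.le]
  · nlinarith [three_mul_exp_neg_le_exp h1, mul_nonneg (mul_nonneg hε hf) he.le]

theorem deriv_eq_zero_and_deriv_deriv_eq_zero_of_eventuallyEq_const {f : ℝ → ℝ} {a t : ℝ}
    (hf : f =ᶠ[nhds t] fun _ => a) : deriv f t = 0 ∧ deriv (deriv f) t = 0 := by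
  refine ⟨by simp [hf.deriv_eq], ?_⟩
  rw [hf.deriv.deriv_eq]
  simp

/-- For `0 < ε ≤ 1` and a smooth nonincreasing cutoff `φ` with values in `[0,1]`,
`|φ'| ≤ ε`, `|φ''| ≤ ε` and `φ ≡ 1` on `(-∞, 1]`, the warping function
`c(t) = (e^t + φ(t)e^{-t})/2` satisfies `0 < c''(t) ≤ (1+ε)c(t)` for all `t > 0`;
equivalently `-c''(t)/c(t) ∈ [-1-ε, 0)`. -/
theorem stmt_4 (ε : ℝ) (hε0 : 0 < ε) (hε1 : ε ≤ 1)
    (φ : ℝ → ℝ) (hφ : ContDiff ℝ (⊤ : ℕ∞) φ)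
    (hφ01 : ∀ t, 0 ≤ φ t ∧ φ t ≤ 1)
    (hφ'le : ∀ t, deriv φ t ≤ 0)
    (hφ'abs : ∀ t, |deriv φ t| ≤ ε)
    (hφ''abs : ∀ t, |deriv (deriv φ) t| ≤ ε)
    (hφ1 : ∀ t ≤ (1 : ℝ), φ t = 1)
    (c : ℝ → ℝ)
    (hc : ∀ t, c t = (Real.exp t + φ t * Real.exp (-t)) / 2) :
    ∀ t > (0 : ℝ), (0 < deriv (deriv c) t ∧ deriv (deriv c) t ≤ (1 + ε) * c t) ∧
      -(deriv (deriv c) t) / c t ∈ Set.Ico (-1 - ε) 0 := by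
  intro t ht
  have hc'' : deriv (deriv c) t = warp (fun s => deriv (deriv φ) s - 2 * deriv φ s + φ s) t := by
    rw [show c = warp φ from funext hc, deriv_deriv_warp (hφ.of_le (by norm_cast))]
  obtain ⟨hφ0, -⟩ := hφ01 t
  have hφ' := abs_le.mp (hφ'abs t)
  have hφ'' := abs_le.mp (hφ''abs t)
  have hc_pos : 0 < c t := hc t ▸ warp_pos ht (by linarith)
  have hc''_pos : 0 < deriv (deriv c) t := hc'' ▸ warp_pos ht (by linarith [hφ'le t])
  have hc''_le : deriv (deriv c) t ≤ (1 + ε) * c t := by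
    rw [hc'', hc t]
    refine warp_le_one_add_mul_warp hε0.le hφ0 (by linarith) fun h1 => ?_
    obtain ⟨h₁, h₂⟩ := deriv_eq_zero_and_deriv_deriv_eq_zero_of_eventuallyEq_const
      (Filter.eventuallyEq_of_mem (Iio_mem_nhds h1) fun s hs => hφ1 s (le_of_lt hs))
    simp [h₁, h₂]
  have hratio : deriv (deriv c) t / c t ≤ 1 + ε := (div_le_iff₀ hc_pos).mpr (by linarith)
  refine ⟨⟨hc''_pos, hc''_le⟩, ?_, ?_⟩ <;> rw [neg_div]
  · linarith
  · exact neg_neg_of_pos (div_pos hc''_pos hc_pos)
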